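/- arXiv:1211.5694 — 2 statements merged into one kernel-verified Lean document; each statement's English description precedes it below -/
import Mathlib

section
/- Let d ≥ 3 be a natural number and let G be a simple graph that is acyclic and d-regular (every vertex has exactly d neighbors). Then for every finite set A of vertices of G, the edge boundary ∂A is finite and satisfies #∂A ≥ (d-2)·#A. -/
/-!
Counting the darts that start in `A` gives `d · #A = #∂A + 2 · #E(A)`, where `E(A)` is the edge set
of the subgraph induced on `A`. That subgraph is a finite forest, so extending it to a spanning tree
of the complete graph on `A` shows `#E(A) ≤ #A`.
-/

/-- The edge boundary of a set of vertices `A`: the edges of `G` with exactly one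
endpoint in `A`. -/
def edgeBoundary {V : Type*} (G : SimpleGraph V) (A : Set V) : Set (Sym2 V) :=
  {e ∈ G.edgeSet | ∃ v w, e = s(v, w) ∧ v ∈ A ∧ w ∉ A}

open Finset

namespace SimpleGraph

variable {V : Type*} {G : SimpleGraph V}

theorem IsAcyclic.card_edgeFinset_le [Fintype V] [Fintype G.edgeSet] (hG : G.IsAcyclic) :
    #G.edgeFinset ≤ Fintype.card V := by
  cases isEmpty_or_nonempty V
  · simp [eq_empty_of_isEmpty G.edgeFinset]
  classical
  obtain ⟨T, hGT, -, hT⟩ := connected_top.exists_isTree_le_of_le_of_isAcyclic le_top hG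
  calc #G.edgeFinset ≤ #T.edgeFinset := card_le_card (edgeFinset_mono hGT)
    _ ≤ Fintype.card V := by rw [← hT.card_edgeFinset]; omega

variable [G.LocallyFinite] [DecidableEq V]

theorem IsAcyclic.sum_card_neighborFinset_inter_le (hG : G.IsAcyclic) (A : Finset V) :
    ∑ v ∈ A, #(G.neighborFinset v ∩ A) ≤ 2 * #A := by
  classical
  have hdeg : ∀ v : (A : Set V), (G.induce A).degree v = #(G.neighborFinset v ∩ A) := by
    intro v
    rw [← card_neighborFinset_eq_degree, ← card_map (.subtype (· ∈ (A : Set V)))]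
    congr 1
    ext w
    simp
  calc ∑ v ∈ A, #(G.neighborFinset v ∩ A)
      = ∑ v : (A : Set V), (G.induce A).degree v := by
        rw [← sum_coe_sort A]; exact sum_congr rfl fun v _ => (hdeg v).symm
    _ = 2 * #(G.induce A).edgeFinset := sum_degrees_eq_twice_card_edges _
    _ ≤ 2 * #A := by
        gcongr
        simpa using (hG.induce A).card_edgeFinset_le

end SimpleGraph

section

variable {V : Type*} {G : SimpleGraph V} [G.LocallyFinite] [DecidableEq V]

open SimpleGraph

theorem edgeBoundary_coe_eq_image (A : Finset V) :
    edgeBoundary G A =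
      ((A.sigma fun v => G.neighborFinset v \ A).image fun p => s(p.1, p.2) : Set (Sym2 V)) := by
  ext e
  simp only [edgeBoundary, Set.mem_ofPred_eq, coe_image, Set.mem_image, mem_coe, mem_sigma,
    mem_sdiff, mem_neighborFinset, Sigma.exists]
  constructor
  · rintro ⟨he, v, w, rfl, hv, hw⟩
    exact ⟨v, w, ⟨hv, he, hw⟩, rfl⟩
  · rintro ⟨v, w, ⟨hv, hvw, hw⟩, rfl⟩
    exact ⟨hvw, v, w, rfl, hv, hw⟩

theorem ncard_edgeBoundary_coe (A : Finset V) :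
    (edgeBoundary G A).ncard = ∑ v ∈ A, #(G.neighborFinset v \ A) := by
  rw [edgeBoundary_coe_eq_image, Set.ncard_coe_finset, card_image_of_injOn, card_sigma]
  rintro ⟨v, w⟩ hvw ⟨v', w'⟩ hvw' h
  simp only [coe_sigma, Set.mem_sigma_iff, mem_coe, mem_sdiff] at hvw hvw'
  rcases Sym2.eq_iff.mp h with ⟨rfl, rfl⟩ | ⟨rfl, rfl⟩
  · rfl
  · exact absurd hvw.1 hvw'.2.2

theorem SimpleGraph.IsAcyclic.sum_degree_le_ncard_edgeBoundary_add (hG : G.IsAcyclic) (A : Finset V) :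
    ∑ v ∈ A, G.degree v ≤ (edgeBoundary G A).ncard + 2 * #A := by
  calc ∑ v ∈ A, G.degree v
      = ∑ v ∈ A, #(G.neighborFinset v \ A) + ∑ v ∈ A, #(G.neighborFinset v ∩ A) := by
        rw [← sum_add_distrib]
        exact sum_congr rfl fun v _ => (card_sdiff_add_card_inter _ _).symm
    _ ≤ (edgeBoundary G A).ncard + 2 * #A := by
        rw [ncard_edgeBoundary_coe]
        gcongr
        exact hG.sum_card_neighborFinset_inter_le A

end

theorem edgeBoundary_card_ge_of_acyclic_regular_general
    {V : Type*} (d : ℕ) (G : SimpleGraph V)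
    [∀ v, Fintype (G.neighborSet v)]
    (hac : G.IsAcyclic) (hreg : G.IsRegularOfDegree d)
    (A : Set V) (hA : A.Finite) :
    (edgeBoundary G A).Finite ∧ (d - 2) * A.ncard ≤ (edgeBoundary G A).ncard := by
  classical
  lift A to Finset V using hA
  refine ⟨by rw [edgeBoundary_coe_eq_image]; exact finite_toSet _, ?_⟩
  have hsum : ∑ v ∈ A, G.degree v = d * #A := by
    rw [sum_congr rfl fun v _ => hreg v, sum_const, smul_eq_mul, mul_comm]
  have := hac.sum_degree_le_ncard_edgeBoundary_add A
  rw [Set.ncard_coe_finset, Nat.sub_mul]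
  omega

/-- Isoperimetric inequality on the `d`-regular tree: for every finite set `A` of
vertices, the edge boundary is finite and `#∂A ≥ (d-2)·#A`. -/
theorem edgeBoundary_card_ge_of_acyclic_regular
    {V : Type*} (d : ℕ) (hd : 3 ≤ d) (G : SimpleGraph V)
    [∀ v, Fintype (G.neighborSet v)]
    (hac : G.IsAcyclic) (hreg : G.IsRegularOfDegree d)
    (A : Set V) (hA : A.Finite) :
    (edgeBoundary G A).Finite ∧ (d - 2) * A.ncard ≤ (edgeBoundary G A).ncard :=
  edgeBoundary_card_ge_of_acyclic_regular_general d G hac hreg A hA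
end

section
/- Let d ≥ 3 be a natural number, let λ ≥ 1 and α > 0 be real numbers satisfying λ(d-1)α² - dα + λ ≤ 0. Let G be a simple graph on a vertex set V and let h : V → ℤ be a function such that every vertex v has exactly one neighbor u with h(u) = h(v) - 1, exactly d-1 neighbors u with h(u) = h(v) + 1, and every neighbor u of v satisfies h(u) = h(v) + 1 or h(u) = h(v) - 1. Then for every finite set U ⊆ V, ∑_{v ∈ U} ∑_{u : u adjacent to v, u ∉ U} (λ·α^{h(u)} - α^{h(v)}) ≤ 0, where α^m denotes the integer power of the positive real α. -/
/-!
Each vertex `v` has one neighbour at height `h v - 1` and `d - 1` at height `h v + 1`, so the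
sum of `λ α ^ h u - α ^ h v` over all neighbours `u` of `v` is
`α ^ (h v - 1) (λ (d - 1) α² - d α + λ) ≤ 0`. The boundary sum of `U` is the sum of these local
sums over `v ∈ U` minus the same expression summed over adjacent pairs inside `U`; by symmetry
of adjacency the latter is `(λ - 1) ∑ α ^ h v ≥ 0`.
-/

theorem zpow_quadratic_identity (lam α d : ℝ) (n : ℤ) (hα : α ≠ 0) :
    lam * α ^ (n - 1) - α ^ n + (d - 1) * (lam * α ^ (n + 1) - α ^ n) =
      α ^ (n - 1) * (lam * (d - 1) * α ^ 2 - d * α + lam) := by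
  have hn : α ^ n = α ^ (n - 1) * α := by rw [← zpow_add_one₀ hα, sub_add_cancel]
  have hn' : α ^ (n + 1) = α ^ (n - 1) * α ^ 2 := by
    rw [← zpow_natCast, ← zpow_add₀ hα]
    ring_nf
  rw [hn, hn']
  ring

namespace SimpleGraph

section Height

variable {V : Type*} {G : SimpleGraph V} {h : V → ℤ} {v p : V}

theorem neighborSet_eq_insert_of_height (hstep : ∀ u, G.Adj v u → h u = h v + 1 ∨ h u = h v - 1)
    (hp : G.Adj v p ∧ h p = h v - 1) (hpu : ∀ u, G.Adj v u ∧ h u = h v - 1 → u = p) :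
    G.neighborSet v = insert p {u | G.Adj v u ∧ h u = h v + 1} := by
  ext u
  simp only [mem_neighborSet, Set.mem_insert_iff, Set.mem_ofPred_eq]
  constructor
  · intro hu
    rcases hstep u hu with hup | hdown
    · exact Or.inr ⟨hu, hup⟩
    · exact Or.inl (hpu u ⟨hu, hdown⟩)
  · rintro (rfl | ⟨hu, -⟩)
    exacts [hp.1, hu]

theorem sum_neighborFinset_comp_height [Fintype (G.neighborSet v)] {M : Type*} [AddCommMonoid M]
    (hstep : ∀ u, G.Adj v u → h u = h v + 1 ∨ h u = h v - 1)
    (hp : G.Adj v p ∧ h p = h v - 1) (hpu : ∀ u, G.Adj v u ∧ h u = h v - 1 → u = p)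
    (g : ℤ → M) :
    ∑ u ∈ G.neighborFinset v, g (h u) =
      g (h v - 1) + {u | G.Adj v u ∧ h u = h v + 1}.ncard • g (h v + 1) := by
  classical
  set C := (G.neighborFinset v).filter fun u => h u = h v + 1
  have hN : G.neighborFinset v = insert p C := by
    rw [← Finset.coe_inj, coe_neighborFinset, neighborSet_eq_insert_of_height hstep hp hpu]
    ext u
    simp [C]
  have hpC : p ∉ C := by simp only [C, Finset.mem_filter, hp.2]; omega
  have hcard : C.card = {u | G.Adj v u ∧ h u = h v + 1}.ncard := by
    rw [← Set.ncard_coe_finset]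
    congr 1
    ext u
    simp [C]
  rw [hN, Finset.sum_insert hpC, hp.2,
    Finset.sum_congr rfl fun u hu => by rw [(Finset.mem_filter.1 hu).2], Finset.sum_const, hcard]

theorem sum_neighborFinset_zpow_height_nonpos [Fintype (G.neighborSet v)] {d : ℕ} (hd : 1 ≤ d)
    {lam α : ℝ} (hα : 0 < α) (hquad : lam * (d - 1) * α ^ 2 - d * α + lam ≤ 0)
    (hstep : ∀ u, G.Adj v u → h u = h v + 1 ∨ h u = h v - 1)
    (hp : G.Adj v p ∧ h p = h v - 1) (hpu : ∀ u, G.Adj v u ∧ h u = h v - 1 → u = p)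
    (hchildren : {u | G.Adj v u ∧ h u = h v + 1}.ncard = d - 1) :
    ∑ u ∈ G.neighborFinset v, (lam * α ^ h u - α ^ h v) ≤ 0 := by
  rw [sum_neighborFinset_comp_height hstep hp hpu fun n => lam * α ^ n - α ^ h v, hchildren,
    nsmul_eq_mul, Nat.cast_sub hd, Nat.cast_one, zpow_quadratic_identity lam α d _ hα.ne']
  exact mul_nonpos_of_nonneg_of_nonpos (zpow_pos hα _).le hquad

end Height

section Boundary

variable {V : Type*} (G : SimpleGraph V) [G.LocallyFinite] [DecidableEq V]

theorem sum_sum_neighborFinset_inter_comm {M : Type*} [AddCommMonoid M] (U : Finset V)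
    (f : V → V → M) :
    ∑ v ∈ U, ∑ u ∈ G.neighborFinset v ∩ U, f v u = ∑ v ∈ U, ∑ u ∈ G.neighborFinset v ∩ U, f u v :=
  Finset.sum_comm' fun v u => by simp only [Finset.mem_inter, mem_neighborFinset, G.adj_comm]; tauto

theorem sum_sum_neighborFinset_inter_nonneg (U : Finset V) {lam : ℝ} (hlam : 1 ≤ lam)
    {w : V → ℝ} (hw : ∀ v ∈ U, 0 ≤ w v) :
    0 ≤ ∑ v ∈ U, ∑ u ∈ G.neighborFinset v ∩ U, (lam * w u - w v) := by
  have hS : 0 ≤ ∑ v ∈ U, ∑ _u ∈ G.neighborFinset v ∩ U, w v :=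
    Finset.sum_nonneg fun v hv => Finset.sum_nonneg fun _ _ => hw v hv
  calc 0 ≤ (lam - 1) * ∑ v ∈ U, ∑ _u ∈ G.neighborFinset v ∩ U, w v :=
        mul_nonneg (by linarith) hS
    _ = ∑ v ∈ U, ∑ u ∈ G.neighborFinset v ∩ U, (lam * w u - w v) := by
        simp only [Finset.sum_sub_distrib, ← Finset.mul_sum,
          G.sum_sum_neighborFinset_inter_comm U fun v u => w u]
        ring

theorem sum_sum_neighborFinset_sdiff_nonpos (U : Finset V) {lam : ℝ} (hlam : 1 ≤ lam)
    {w : V → ℝ} (hw : ∀ v ∈ U, 0 ≤ w v)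
    (hloc : ∀ v ∈ U, ∑ u ∈ G.neighborFinset v, (lam * w u - w v) ≤ 0) :
    ∑ v ∈ U, ∑ u ∈ G.neighborFinset v \ U, (lam * w u - w v) ≤ 0 := by
  have hsplit : ∀ v, ∑ u ∈ G.neighborFinset v \ U, (lam * w u - w v) =
      ∑ u ∈ G.neighborFinset v, (lam * w u - w v) -
        ∑ u ∈ G.neighborFinset v ∩ U, (lam * w u - w v) := fun v =>
    eq_sub_of_add_eq' (Finset.sum_inter_add_sum_sdiff _ _ _)
  rw [Finset.sum_congr rfl fun v _ => hsplit v, Finset.sum_sub_distrib]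
  linarith [Finset.sum_nonpos hloc, G.sum_sum_neighborFinset_inter_nonneg U hlam hw]

end Boundary

end SimpleGraph

open SimpleGraph in
/-- The supermartingale inequality (5.2): on the `d`-regular tree oriented by a
height function `h` (one parent at height `h v - 1` and `d-1` children at height
`h v + 1` per vertex), if `λ(d-1)α² - dα + λ ≤ 0` then for every finite set `U`
of vertices, `∑_{v ∈ U} ∑_{u ∼ v, u ∉ U} (λ·α^{h(u)} - α^{h(v)}) ≤ 0`. -/
theorem boundary_sum_nonpos_of_quadratic
    {V : Type*} (d : ℕ) (hd : 3 ≤ d) (lam α : ℝ) (hlam : 1 ≤ lam) (hα : 0 < α)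
    (hquad : lam * (d - 1) * α ^ 2 - d * α + lam ≤ 0)
    (G : SimpleGraph V) (h : V → ℤ)
    (hparent : ∀ v, ∃! u, G.Adj v u ∧ h u = h v - 1)
    (hchildren : ∀ v, {u | G.Adj v u ∧ h u = h v + 1}.Finite ∧
      {u | G.Adj v u ∧ h u = h v + 1}.ncard = d - 1)
    (hstep : ∀ v u, G.Adj v u → h u = h v + 1 ∨ h u = h v - 1)
    (U : Set V) (hU : U.Finite) :
    ∑ᶠ v ∈ U, ∑ᶠ u ∈ {u | G.Adj v u ∧ u ∉ U}, (lam * α ^ h u - α ^ h v) ≤ 0 := by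
  classical
  choose p hp hpu using hparent
  have hN := fun v => neighborSet_eq_insert_of_height (hstep v) (hp v) (hpu v)
  have : G.LocallyFinite := fun v => (((hchildren v).1.insert (p v)).subset (hN v).le).fintype
  lift U to Finset V using hU
  have hboundary : ∀ v, {u | G.Adj v u ∧ u ∉ (U : Set V)} = ↑(G.neighborFinset v \ U) :=
    fun v => by ext; simp
  simp only [hboundary, finsum_mem_coe_finset]
  exact G.sum_sum_neighborFinset_sdiff_nonpos U hlam (fun v _ => (zpow_pos hα _).le) fun v _ =>
    sum_neighborFinset_zpow_height_nonpos (by omega) hα hquad (hstep v) (hp v) (hpu v)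
      (hchildren v).2
end
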